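/- Consider the graph G_X as above. The minimum size of a vertex cover of G_X equals 2k − 1 if X(I,J) = 1, and is at most 2k − 2 if X(I,J) = 0. Hence the 0/1 value X(I,J) is determined by whether G_X has a vertex cover of size 2k − 2. -/
import Mathlib

inductive GXVert (k : ℕ) : Type
  | v (i : Fin k) | v' (i : Fin k) | v'' (i : Fin k)
  | w (j : Fin k) | w' (j : Fin k) | w'' (j : Fin k)
deriving DecidableEq

def GXRel (k : ℕ) (X : Fin k → Fin k → Bool) (I J : Fin k) :
    GXVert k → GXVert k → Prop
  | GXVert.v i, GXVert.w j => X i j = true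
  | GXVert.v i, GXVert.v' i' => i = i' ∧ i ≠ I
  | GXVert.v i, GXVert.v'' i' => i = i' ∧ i ≠ I
  | GXVert.w j, GXVert.w' j' => j = j' ∧ j ≠ J
  | GXVert.w j, GXVert.w'' j' => j = j' ∧ j ≠ J
  | _, _ => False

def GX (k : ℕ) (X : Fin k → Fin k → Bool) (I J : Fin k) : SimpleGraph (GXVert k) :=
  SimpleGraph.fromRel (GXRel k X I J)

def IsVC {V : Type*} (G : SimpleGraph V) (S : Set V) : Prop :=
  ∀ ⦃u w : V⦄, G.Adj u w → u ∈ S ∨ w ∈ S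

deriving instance Fintype for GXVert

-- the basic cover
def S0 (k : ℕ) (I J : Fin k) : Set (GXVert k) :=
  {x | match x with
       | GXVert.v i => i ≠ I
       | GXVert.w j => j ≠ J
       | _ => False}

lemma S0_eq (k : ℕ) (I J : Fin k) :
    S0 k I J = (GXVert.v '' {i | i ≠ I}) ∪ (GXVert.w '' {j | j ≠ J}) := by
  ext x
  cases x <;> simp [S0]

lemma ncard_ne {k : ℕ} (I : Fin k) : {i : Fin k | i ≠ I}.ncard = k - 1 := by
  have h1 : {i : Fin k | i ≠ I} = ({I} : Set (Fin k))ᶜ := by ext i; simp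
  have h2 := Set.ncard_add_ncard_compl ({I} : Set (Fin k))
  rw [h1]
  simp [Set.ncard_singleton, Nat.card_eq_fintype_card] at h2 ⊢
  omega

lemma ncard_S0 (k : ℕ) (I J : Fin k) : (S0 k I J).ncard = 2 * k - 2 := by
  rw [S0_eq]
  have hv : Function.Injective (GXVert.v (k := k)) := by intro a b h; cases h; rfl
  have hw : Function.Injective (GXVert.w (k := k)) := by intro a b h; cases h; rfl
  rw [Set.ncard_union_eq ?_ (Set.toFinite _) (Set.toFinite _)]
  · rw [Set.ncard_image_of_injective _ hv, Set.ncard_image_of_injective _ hw, ncard_ne, ncard_ne]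
    omega
  · rw [Set.disjoint_left]
    rintro x ⟨i, -, rfl⟩ ⟨j, -, h⟩
    exact absurd h (by simp)

lemma S0_cover {k : ℕ} {X : Fin k → Fin k → Bool} {I J : Fin k} (hX : X I J = false) :
    IsVC (GX k X I J) (S0 k I J) := by
  intro u w h
  rw [GX, SimpleGraph.fromRel_adj] at h
  obtain ⟨-, h | h⟩ := h <;> cases u <;> cases w <;> simp only [GXRel] at h <;>
    first
    | (obtain ⟨rfl, hne⟩ := h; simp [S0, hne])
    | skip
  case inl.v.w i j =>
    by_cases hi : i = I
    · subst hi
      by_cases hj : j = J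
      · subst hj; rw [hX] at h; cases h
      · exact Or.inr hj
    · exact Or.inl hi
  case inr.w.v j i =>
    by_cases hi : i = I
    · subst hi
      by_cases hj : j = J
      · subst hj; rw [hX] at h; cases h
      · exact Or.inl hj
    · exact Or.inr hi

-- adjacency facts
lemma adj_vv' {k : ℕ} {X : Fin k → Fin k → Bool} {I J : Fin k} {i : Fin k} (hi : i ≠ I) :
    (GX k X I J).Adj (GXVert.v i) (GXVert.v' i) := by
  simp [GX, SimpleGraph.fromRel_adj, GXRel, hi]

lemma adj_ww' {k : ℕ} {X : Fin k → Fin k → Bool} {I J : Fin k} {j : Fin k} (hj : j ≠ J) :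
    (GX k X I J).Adj (GXVert.w j) (GXVert.w' j) := by
  simp [GX, SimpleGraph.fromRel_adj, GXRel, hj]

lemma adj_vIwJ {k : ℕ} {X : Fin k → Fin k → Bool} {I J : Fin k} (hX : X I J = true) :
    (GX k X I J).Adj (GXVert.v I) (GXVert.w J) := by
  simp [GX, SimpleGraph.fromRel_adj, GXRel, hX]

open Classical in
noncomputable def pick (k : ℕ) (S : Set (GXVert k)) (I J : Fin k) :
    ({i : Fin k // i ≠ I} ⊕ {j : Fin k // j ≠ J} ⊕ Unit) → GXVert k
  | Sum.inl ⟨i, _⟩ => if GXVert.v i ∈ S then GXVert.v i else GXVert.v' i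
  | Sum.inr (Sum.inl ⟨j, _⟩) => if GXVert.w j ∈ S then GXVert.w j else GXVert.w' j
  | Sum.inr (Sum.inr _) => if GXVert.v I ∈ S then GXVert.v I else GXVert.w J

-- lower bound
lemma lower_bound {k : ℕ} (hk : 1 ≤ k) {X : Fin k → Fin k → Bool} {I J : Fin k}
    (hX : X I J = true) (S : Set (GXVert k)) (hS : IsVC (GX k X I J) S) :
    2 * k - 1 ≤ S.ncard := by
  classical
  have hmem : ∀ x, pick k S I J x ∈ S := by
    rintro (⟨i, hi⟩ | ⟨j, hj⟩ | ⟨⟩) <;> simp only [pick] <;> split_ifs with h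
    · exact h
    · exact (hS (adj_vv' (X := X) (J := J) hi)).resolve_left h
    · exact h
    · exact (hS (adj_ww' (X := X) (I := I) hj)).resolve_left h
    · exact h
    · exact (hS (adj_vIwJ hX)).resolve_left h
  have hinj : Function.Injective (fun x => (⟨pick k S I J x, hmem x⟩ : S)) := by
    rintro (⟨i, hi⟩ | ⟨j, hj⟩ | ⟨⟩) (⟨i', hi'⟩ | ⟨j', hj'⟩ | ⟨⟩) h <;>
      first
      | exact congrArg _ (congrArg _ (Subsingleton.elim _ _))
      | (simp only [Subtype.mk.injEq, pick] at h
         split_ifs at h <;>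
           first
           | (simp_all; done)
           | (injection h with h; exact absurd h.symm (by assumption)))
  have hcard := Nat.card_le_card_of_injective _ hinj
  rw [Nat.card_eq_fintype_card, Nat.card_coe_set_eq] at hcard
  refine le_trans ?_ hcard
  simp [Fintype.card_subtype_compl, Fintype.card_subtype_eq]
  omega

theorem stmt_13 (k : ℕ) (hk : 1 ≤ k) (X : Fin k → Fin k → Bool) (I J : Fin k) :
    (X I J = true →
      (∃ S : Set (GXVert k), IsVC (GX k X I J) S ∧ S.ncard = 2 * k - 1) ∧
        ∀ S : Set (GXVert k), IsVC (GX k X I J) S → 2 * k - 1 ≤ S.ncard) ∧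
      (X I J = false →
        ∃ S : Set (GXVert k), IsVC (GX k X I J) S ∧ S.ncard ≤ 2 * k - 2) ∧
      (X I J = false ↔
        ∃ S : Set (GXVert k), IsVC (GX k X I J) S ∧ S.ncard ≤ 2 * k - 2) := by
  have hfalse : X I J = false →
      ∃ S : Set (GXVert k), IsVC (GX k X I J) S ∧ S.ncard ≤ 2 * k - 2 := by
    intro hX
    exact ⟨S0 k I J, S0_cover hX, le_of_eq (ncard_S0 k I J)⟩
  refine ⟨fun hX => ⟨?_, fun S hS => lower_bound hk hX S hS⟩, hfalse, hfalse, fun h => ?_⟩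
  · refine ⟨insert (GXVert.v I) (S0 k I J), ?_, ?_⟩
    · intro u w h
      rw [GX, SimpleGraph.fromRel_adj] at h
      obtain ⟨-, h | h⟩ := h <;> cases u <;> cases w <;> simp only [GXRel] at h <;>
        first
        | (obtain ⟨rfl, hne⟩ := h; simp [S0, hne])
        | skip
      case inl.v.w i j =>
        by_cases hi : i = I
        · subst hi; simp
        · left; simp [S0, hi]
      case inr.w.v j i =>
        by_cases hi : i = I
        · subst hi; simp
        · right; simp [S0, hi]
    · rw [Set.ncard_insert_of_notMem (by simp [S0]) (Set.toFinite _), ncard_S0]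
      omega
  · by_contra hX
    rw [Bool.not_eq_false] at hX
    obtain ⟨S, hS, hle⟩ := h
    have := lower_bound hk hX S hS
    omega
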